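/- (Disconnecting Lemma) Let G = (V,E) be a finite simple connected graph and p : V → ℝ² a map in general position. Suppose that after removing k edges e₁ = {i₁,j₁}, ..., e_k = {i_k,j_k} the graph becomes the disjoint union of two connected graphs G₁ = (V₁,E₁) and G₂ = (V₂,E₂) (so V₁ ∩ V₂ = ∅, V₁ ∪ V₂ = V, E₁ ∪ E₂ ∪ {e₁,...,e_k} = E), with i₁,...,i_k ∈ V₁ and j₁,...,j_k ∈ V₂. Let V₃ = {i₁,...,i_k}, V₄ = {j₁,...,j_k}, and let E₅ be the union of all edges of the complete graphs on V₃ and on V₄ together with {e₁,...,e_k}. If s_p(E₅) = 0, then s_p(E) = s_p(E₁) + s_p(E₂). -/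

import Mathlib

noncomputable section

open Classical in
/-- The edge vector of the pair `(i, j)` under the realization `p`: the function `V → ℝ × ℝ`
whose value is `p i - p j` at `i`, `p j - p i` at `j`, and `0` elsewhere. -/
def edgeVec {V : Type*} (p : V → ℝ × ℝ) (i j : V) : V → ℝ × ℝ :=
  fun v => if v = i then p i - p j else if v = j then p j - p i else 0

/-- The set of edge vectors of a set `F` of (potential) edges under the realization `p`. -/
def edgeVecs {V : Type*} (p : V → ℝ × ℝ) (F : Set (Sym2 V)) : Set (V → ℝ × ℝ) :=
  {x | ∃ i j, s(i, j) ∈ F ∧ x = edgeVec p i j}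

/-- The rank of the edge vectors of `F` under the realization `p`. -/
def rankOf {V : Type*} (p : V → ℝ × ℝ) (F : Set (Sym2 V)) : ℕ :=
  Module.finrank ℝ (Submodule.span ℝ (edgeVecs p F))

/-- The generic rank of a set of edges: the maximum over all realizations `p` of the rank. -/
def genRankSet {V : Type*} (F : Set (Sym2 V)) : ℕ :=
  ⨆ p : V → ℝ × ℝ, rankOf p F

/-- The generic rank `r(G)` of a graph. -/
def genRank {V : Type*} (G : SimpleGraph V) : ℕ := genRankSet G.edgeSet

/-- The stress number `s_p(F)` of a set of edges under the realization `p`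
(the dimension of the space of resolvable stresses). -/
def stressNum {V : Type*} (p : V → ℝ × ℝ) (F : Set (Sym2 V)) : ℕ :=
  F.ncard - rankOf p F

/-- The generic stress number `s(F)` of a set of edges. -/
def genStressSet {V : Type*} (F : Set (Sym2 V)) : ℕ := F.ncard - genRankSet F

/-- The generic stress number `s(G)` of a graph. -/
def genStress {V : Type*} (G : SimpleGraph V) : ℕ := G.edgeSet.ncard - genRank G

/-- A planar configuration is in general position if it is injective and no three distinct
vertices have collinear images. -/
def GeneralPosition {V : Type*} (p : V → ℝ × ℝ) : Prop :=
  Function.Injective p ∧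
    ∀ i j k : V, i ≠ j → j ≠ k → i ≠ k →
      ¬ Collinear ℝ ({p i, p j, p k} : Set (ℝ × ℝ))

/-- `W_U`: the subspace of functions `V → ℝ × ℝ` vanishing at every vertex outside `U`. -/
def vanishOn {V : Type*} (U : Set V) : Submodule ℝ (V → ℝ × ℝ) where
  carrier := {f | ∀ v ∉ U, f v = 0}
  zero_mem' := fun v _ => rfl
  add_mem' := by
    intro a b ha hb v hv
    simp [Pi.add_apply, ha v hv, hb v hv]
  smul_mem' := by
    intro c f hf v hv
    simp [Pi.smul_apply, hf v hv]

end

/-!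
For disjoint edge sets the stress number of the union is the sum of the stress numbers plus the
dimension of the intersection of the spans of the edge vectors. The spans of `E₁` and `E₂` live on
disjoint vertex sets and meet trivially. A vector of `span E₁ + span E₂` lying in the span of the
cut edges splits into two equilibrium loads, supported on `V₃` and on `V₄`. In general position
every equilibrium load supported on a vertex set is resolved by the complete graph on that set, so
the vector lies in the span of the two cliques, which meets the span of the cut edges trivially
since `s_p(E₅) = 0`; the same assumption gives `s_p(cut) = 0`.
-/

open Set Submodule

lemma Set.sym2_mono {α : Type*} {s t : Set α} (h : s ⊆ t) : s.sym2 ⊆ t.sym2 := fun _ he =>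
  mem_sym2_iff_subset.2 ((mem_sym2_iff_subset.1 he).trans h)

lemma Set.disjoint_sym2 {α : Type*} {s t : Set α} (h : Disjoint s t) : Disjoint s.sym2 t.sym2 := by
  rw [disjoint_left]
  intro e
  induction e using Sym2.ind with
  | _ x y => exact fun hs ht => disjoint_left.1 h hs.1 ht.1

section EdgeVectors

variable {V : Type*} (p : V → ℝ × ℝ)

lemma edgeVec_comm (i j : V) : edgeVec p i j = edgeVec p j i := by
  funext v
  by_cases hi : v = i <;> by_cases hj : v = j <;> simp_all [edgeVec]

@[simp] lemma edgeVec_apply_left (i j : V) : edgeVec p i j i = p i - p j := by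
  simp [edgeVec]

@[simp] lemma edgeVec_apply_right (i j : V) : edgeVec p i j j = p j - p i := by
  rw [edgeVec_comm, edgeVec_apply_left]

lemma edgeVec_apply_of_ne {i j v : V} (hi : v ≠ i) (hj : v ≠ j) : edgeVec p i j v = 0 := by
  simp [edgeVec, hi, hj]

lemma edgeVecs_eq_image (F : Set (Sym2 V)) :
    edgeVecs p F = Sym2.lift ⟨edgeVec p, edgeVec_comm p⟩ '' F := by
  ext x
  constructor
  · rintro ⟨i, j, hij, rfl⟩
    exact ⟨s(i, j), hij, rfl⟩
  · rintro ⟨e, he, rfl⟩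
    induction e using Sym2.ind with
    | _ i j => exact ⟨i, j, he, rfl⟩

def edgeSpan (F : Set (Sym2 V)) : Submodule ℝ (V → ℝ × ℝ) := span ℝ (edgeVecs p F)

lemma rankOf_eq_finrank_edgeSpan (F : Set (Sym2 V)) :
    rankOf p F = Module.finrank ℝ (edgeSpan p F) := rfl

lemma edgeVec_mem_edgeSpan {F : Set (Sym2 V)} {i j : V} (h : s(i, j) ∈ F) :
    edgeVec p i j ∈ edgeSpan p F :=
  subset_span ⟨i, j, h, rfl⟩

lemma edgeSpan_mono {F F' : Set (Sym2 V)} (h : F ⊆ F') : edgeSpan p F ≤ edgeSpan p F' :=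
  span_mono fun _ ⟨i, j, hij, hx⟩ => ⟨i, j, h hij, hx⟩

lemma edgeSpan_union (F₁ F₂ : Set (Sym2 V)) :
    edgeSpan p (F₁ ∪ F₂) = edgeSpan p F₁ ⊔ edgeSpan p F₂ := by
  rw [edgeSpan, edgeVecs_eq_image, image_union, span_union, ← edgeVecs_eq_image,
    ← edgeVecs_eq_image]
  rfl

lemma vanishOn_mono {U U' : Set V} (h : U ⊆ U') : vanishOn U ≤ vanishOn U' :=
  fun _ hf v hv => hf v fun hvU => hv (h hvU)

lemma disjoint_vanishOn {U₁ U₂ : Set V} (h : Disjoint U₁ U₂) :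
    Disjoint (vanishOn U₁ : Submodule ℝ (V → ℝ × ℝ)) (vanishOn U₂) := by
  rw [Submodule.disjoint_def]
  intro f h₁ h₂
  funext v
  by_cases hv : v ∈ U₁
  · exact h₂ v (disjoint_left.1 h hv)
  · exact h₁ v hv

lemma edgeSpan_le_vanishOn {F : Set (Sym2 V)} {U : Set V} (hF : F ⊆ U.sym2) :
    edgeSpan p F ≤ vanishOn U := by
  rw [edgeSpan, span_le]
  rintro x ⟨i, j, hij, rfl⟩ v hv
  have hU : i ∈ U ∧ j ∈ U := hF hij
  exact edgeVec_apply_of_ne p (fun h => hv (h ▸ hU.1)) (fun h => hv (h ▸ hU.2))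

lemma mem_vanishOn_inter_of_add_mem {U₁ U₂ S : Set V} (hU : Disjoint U₁ U₂)
    {y₁ y₂ : V → ℝ × ℝ} (hy₁ : y₁ ∈ vanishOn U₁) (hy₂ : y₂ ∈ vanishOn U₂)
    (hy : y₁ + y₂ ∈ vanishOn S) : y₁ ∈ vanishOn (S ∩ U₁) := by
  intro v hv
  by_cases hvU : v ∈ U₁
  · have hvS : v ∉ S := fun hvS => hv ⟨hvS, hvU⟩
    simpa [hy₂ v (disjoint_left.1 hU hvU)] using hy v hvS
  · exact hy₁ v hvU

end EdgeVectors

section StressNumber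

variable {V : Type*} [Finite V] (p : V → ℝ × ℝ)

lemma rankOf_le_ncard (F : Set (Sym2 V)) : rankOf p F ≤ F.ncard := by
  classical
  have hfin : (edgeVecs p F).Finite := edgeVecs_eq_image p F ▸ (toFinite F).image _
  have : Fintype (edgeVecs p F) := hfin.fintype
  calc rankOf p F ≤ (edgeVecs p F).toFinset.card := finrank_span_le_card _
    _ = (edgeVecs p F).ncard := (ncard_eq_toFinset_card' _).symm
    _ ≤ F.ncard := edgeVecs_eq_image p F ▸ ncard_image_le (toFinite F)

variable {p} {F₁ F₂ : Set (Sym2 V)}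

lemma stressNum_union (hF : Disjoint F₁ F₂) :
    stressNum p (F₁ ∪ F₂) =
      stressNum p F₁ + stressNum p F₂ + Module.finrank ℝ ↥(edgeSpan p F₁ ⊓ edgeSpan p F₂) := by
  have hdim := Submodule.finrank_sup_add_finrank_inf_eq (edgeSpan p F₁) (edgeSpan p F₂)
  rw [← edgeSpan_union, ← rankOf_eq_finrank_edgeSpan, ← rankOf_eq_finrank_edgeSpan,
    ← rankOf_eq_finrank_edgeSpan] at hdim
  have h₁ := rankOf_le_ncard p F₁
  have h₂ := rankOf_le_ncard p F₂
  unfold stressNum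
  rw [ncard_union_eq hF]
  omega

lemma stressNum_union_of_disjoint_edgeSpan (hF : Disjoint F₁ F₂)
    (hspan : Disjoint (edgeSpan p F₁) (edgeSpan p F₂)) :
    stressNum p (F₁ ∪ F₂) = stressNum p F₁ + stressNum p F₂ := by
  rw [stressNum_union hF, hspan.eq_bot, finrank_bot, add_zero]

lemma stressNum_union_eq_zero_iff (hF : Disjoint F₁ F₂) :
    stressNum p (F₁ ∪ F₂) = 0 ↔
      stressNum p F₁ = 0 ∧ stressNum p F₂ = 0 ∧ Disjoint (edgeSpan p F₁) (edgeSpan p F₂) := by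
  rw [stressNum_union hF, disjoint_iff, ← Submodule.finrank_eq_zero]
  omega

end StressNumber

section Equilibrium

def cross (x y : ℝ × ℝ) : ℝ := x.1 * y.2 - x.2 * y.1

lemma exists_eq_smul_of_cross_eq_zero {x y : ℝ × ℝ} (hx : x ≠ 0) (h : cross x y = 0) :
    ∃ c : ℝ, y = c • x := by
  obtain ⟨x₁, x₂⟩ := x
  obtain ⟨y₁, y₂⟩ := y
  simp only [cross] at h
  by_cases h₁ : x₁ = 0
  · have h₂ : x₂ ≠ 0 := fun h₂ => hx (by simp [h₁, h₂])
    have hy₁ : y₁ = 0 := by simpa [h₁, h₂] using h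
    exact ⟨y₂ / x₂, by simp [h₁, hy₁, field]⟩
  · refine ⟨y₁ / x₁, ?_⟩
    simp only [Prod.smul_mk, smul_eq_mul, Prod.mk.injEq]
    constructor
    · field_simp
    · field_simp
      linarith

lemma exists_eq_smul_add_smul_of_cross_ne_zero {x y : ℝ × ℝ} (h : cross x y ≠ 0) (z : ℝ × ℝ) :
    ∃ c d : ℝ, z = c • x + d • y := by
  -- Cramer's rule
  refine ⟨cross z y / cross x y, cross x z / cross x y, ?_⟩
  obtain ⟨x₁, x₂⟩ := x
  obtain ⟨y₁, y₂⟩ := y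
  obtain ⟨z₁, z₂⟩ := z
  simp only [cross] at h ⊢
  simp only [Prod.smul_mk, Prod.mk_add_mk, smul_eq_mul, Prod.mk.injEq]
  constructor <;> rw [div_mul_eq_mul_div, div_mul_eq_mul_div, ← add_div, eq_div_iff h] <;> ring

lemma GeneralPosition.cross_sub_ne_zero {V : Type*} {p : V → ℝ × ℝ} (hp : GeneralPosition p)
    {i j k : V} (hij : i ≠ j) (hjk : j ≠ k) (hik : i ≠ k) :
    cross (p i - p j) (p i - p k) ≠ 0 := by
  intro h
  obtain ⟨c, hc⟩ := exists_eq_smul_of_cross_eq_zero (sub_ne_zero.2 (hp.1.ne hij)) h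
  refine hp.2 i j k hij hjk hik ((collinear_iff_of_mem (mem_insert (p i) _)).2
    ⟨p i - p j, fun q hq => ?_⟩)
  rcases hq with rfl | rfl | rfl
  · exact ⟨0, by simp⟩
  · exact ⟨-1, by rw [vadd_eq_add, neg_smul, one_smul]; abel⟩
  · exact ⟨-c, by rw [vadd_eq_add, neg_smul, ← hc]; abel⟩

variable {V : Type*} [Fintype V] (p : V → ℝ × ℝ)

def equilibrium : Submodule ℝ (V → ℝ × ℝ) where
  carrier := {f | ∑ v, f v = 0 ∧ ∑ v, cross (p v) (f v) = 0}
  zero_mem' := by simp [cross]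
  add_mem' := by
    rintro f g ⟨hf, hf'⟩ ⟨hg, hg'⟩
    refine ⟨by simp [Finset.sum_add_distrib, hf, hg], ?_⟩
    simp only [Pi.add_apply, cross, Prod.fst_add, Prod.snd_add, mul_add, add_sub_add_comm,
      Finset.sum_add_distrib]
    simp_all [cross]
  smul_mem' := by
    rintro c f ⟨hf, hf'⟩
    refine ⟨by simp [← Finset.smul_sum, hf], ?_⟩
    simp only [Pi.smul_apply, cross, Prod.smul_fst, Prod.smul_snd, smul_eq_mul]
    simp only [cross] at hf'
    rw [← mul_zero c, ← hf', Finset.mul_sum]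
    exact Finset.sum_congr rfl fun v _ => by ring

lemma edgeVec_mem_equilibrium (i j : V) : edgeVec p i j ∈ equilibrium p := by
  by_cases hij : i = j
  · subst hij
    have : edgeVec p i i = 0 := funext fun v => by by_cases hv : v = i <;> simp [edgeVec, hv]
    exact this ▸ zero_mem _
  have hzero : ∀ v, v ≠ i ∧ v ≠ j → edgeVec p i j v = 0 := fun v hv =>
    edgeVec_apply_of_ne p hv.1 hv.2
  refine ⟨?_, ?_⟩
  · rw [Fintype.sum_eq_add i j hij hzero]
    simp
  · rw [Fintype.sum_eq_add i j hij fun v hv => by simp [hzero v hv, cross]]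
    simp only [edgeVec_apply_left, edgeVec_apply_right, cross, Prod.fst_sub, Prod.snd_sub]
    ring

lemma edgeSpan_le_equilibrium (F : Set (Sym2 V)) : edgeSpan p F ≤ equilibrium p :=
  span_le.2 fun _ ⟨i, j, _, hx⟩ => hx ▸ edgeVec_mem_equilibrium p i j

end Equilibrium

section Cliques

variable {V : Type*}

def cliqueEdges (S : Set V) : Set (Sym2 V) :=
  {e | ∃ x ∈ S, ∃ y ∈ S, x ≠ y ∧ e = s(x, y)}

lemma cliqueEdges_subset_sym2 (S : Set V) : cliqueEdges S ⊆ S.sym2 := by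
  rintro _ ⟨x, hx, y, hy, -, rfl⟩
  exact ⟨hx, hy⟩

lemma cliqueEdges_mono {S T : Set V} (h : S ⊆ T) : cliqueEdges S ⊆ cliqueEdges T := by
  rintro _ ⟨x, hx, y, hy, hxy, rfl⟩
  exact ⟨x, h hx, y, h hy, hxy, rfl⟩

variable [Fintype V] {p : V → ℝ × ℝ}

lemma exists_mem_edgeSpan_cliqueEdges_insert_apply_eq (hp : GeneralPosition p) {v₀ : V}
    {T : Set V} (hv₀ : v₀ ∉ T) {f : V → ℝ × ℝ} (hf : f ∈ vanishOn (insert v₀ T) ⊓ equilibrium p) :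
    ∃ g ∈ edgeSpan p (cliqueEdges (insert v₀ T)), g v₀ = f v₀ := by
  obtain ⟨hfS, hsum, hmom⟩ := hf
  have hedge : ∀ u ∈ T, edgeVec p v₀ u ∈ edgeSpan p (cliqueEdges (insert v₀ T)) := fun u hu =>
    edgeVec_mem_edgeSpan p ⟨v₀, mem_insert _ _, u, mem_insert_of_mem _ hu,
      (ne_of_mem_of_not_mem hu hv₀).symm, rfl⟩
  -- `f v₀` is matched by no edge if `T = ∅` (zero resultant), by one edge if `T = {u}` (zero
  -- moment), and by two edges at `v₀` spanning the plane otherwise (general position).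
  rcases T.eq_empty_or_nonempty with rfl | hT
  · rw [Fintype.sum_eq_single v₀ fun v hv => hfS v (by simpa using hv)] at hsum
    exact ⟨0, zero_mem _, hsum.symm⟩
  rcases hT.exists_eq_singleton_or_nontrivial with ⟨u, rfl⟩ | ⟨u, hu, w, hw, huw⟩
  · have hv₀u : v₀ ≠ u := by simpa using hv₀
    have hzero : ∀ v, v ≠ v₀ ∧ v ≠ u → f v = 0 := fun v hv => hfS v (by simp [hv.1, hv.2])
    rw [Fintype.sum_eq_add v₀ u hv₀u hzero] at hsum
    rw [Fintype.sum_eq_add v₀ u hv₀u fun v hv => by simp [hzero v hv, cross],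
      eq_neg_of_add_eq_zero_right hsum] at hmom
    have hcross : cross (p v₀ - p u) (f v₀) = 0 := by
      simp only [cross, Prod.fst_sub, Prod.snd_sub, Prod.fst_neg, Prod.snd_neg] at hmom ⊢
      linarith
    obtain ⟨c, hc⟩ := exists_eq_smul_of_cross_eq_zero (sub_ne_zero.2 (hp.1.ne hv₀u)) hcross
    exact ⟨c • edgeVec p v₀ u, smul_mem _ _ (hedge u rfl), by simp [hc]⟩
  · have hv₀u : v₀ ≠ u := (ne_of_mem_of_not_mem hu hv₀).symm
    have hv₀w : v₀ ≠ w := (ne_of_mem_of_not_mem hw hv₀).symm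
    obtain ⟨c, d, hcd⟩ :=
      exists_eq_smul_add_smul_of_cross_ne_zero (hp.cross_sub_ne_zero hv₀u huw hv₀w) (f v₀)
    exact ⟨c • edgeVec p v₀ u + d • edgeVec p v₀ w,
      add_mem (smul_mem _ _ (hedge u hu)) (smul_mem _ _ (hedge w hw)), by simp [hcd]⟩

theorem vanishOn_inf_equilibrium_le_edgeSpan_cliqueEdges (hp : GeneralPosition p) (S : Set V) :
    vanishOn S ⊓ equilibrium p ≤ edgeSpan p (cliqueEdges S) := by
  induction S, S.toFinite using Set.Finite.induction_on with
  | empty =>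
    intro f hf
    have : f = 0 := funext fun v => hf.1 v (notMem_empty v)
    exact this ▸ zero_mem _
  | @insert v₀ T hv₀ _ ih =>
    intro f hf
    obtain ⟨g, hg, hgv₀⟩ := exists_mem_edgeSpan_cliqueEdges_insert_apply_eq hp hv₀ hf
    have hrest : f - g ∈ vanishOn T ⊓ equilibrium p := by
      refine ⟨fun v hv => ?_, sub_mem hf.2 (edgeSpan_le_equilibrium p _ hg)⟩
      by_cases hvv₀ : v = v₀
      · simp [hvv₀, hgv₀]
      · have hv' : v ∉ insert v₀ T := by simp [hvv₀, hv]
        simp [hf.1 v hv', edgeSpan_le_vanishOn p (cliqueEdges_subset_sym2 _) hg v hv']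
    rw [← sub_add_cancel f g]
    exact add_mem (edgeSpan_mono p (cliqueEdges_mono (subset_insert _ _)) (ih hrest)) hg

end Cliques

section Cut

variable {V : Type*} [Fintype V] {p : V → ℝ × ℝ} {U₁ U₂ S₁ S₂ : Set V}

theorem sup_inf_vanishOn_le_edgeSpan_cliqueEdges (hp : GeneralPosition p)
    (hU : Disjoint U₁ U₂) (hS₁ : S₁ ⊆ U₁) (hS₂ : S₂ ⊆ U₂) :
    (vanishOn U₁ ⊓ equilibrium p ⊔ vanishOn U₂ ⊓ equilibrium p) ⊓ vanishOn (S₁ ∪ S₂) ≤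
      edgeSpan p (cliqueEdges S₁ ∪ cliqueEdges S₂) := by
  rintro z ⟨hz, hzS⟩
  obtain ⟨y₁, hy₁, y₂, hy₂, rfl⟩ := mem_sup.1 hz
  have hS₁' : (S₁ ∪ S₂) ∩ U₁ ⊆ S₁ := fun _ ⟨hv, hvU⟩ =>
    hv.resolve_right fun h => disjoint_left.1 hU hvU (hS₂ h)
  have hS₂' : (S₁ ∪ S₂) ∩ U₂ ⊆ S₂ := fun _ ⟨hv, hvU⟩ =>
    hv.resolve_left fun h => disjoint_left.1 hU (hS₁ h) hvU
  have h₁ : y₁ ∈ vanishOn S₁ :=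
    vanishOn_mono hS₁' (mem_vanishOn_inter_of_add_mem hU hy₁.1 hy₂.1 hzS)
  have h₂ : y₂ ∈ vanishOn S₂ :=
    vanishOn_mono hS₂' (mem_vanishOn_inter_of_add_mem hU.symm hy₂.1 hy₁.1 (add_comm y₁ y₂ ▸ hzS))
  rw [edgeSpan_union]
  exact add_mem_sup (vanishOn_inf_equilibrium_le_edgeSpan_cliqueEdges hp S₁ ⟨h₁, hy₁.2⟩)
    (vanishOn_inf_equilibrium_le_edgeSpan_cliqueEdges hp S₂ ⟨h₂, hy₂.2⟩)

theorem disjoint_edgeSpan_union_of_disjoint_cliqueEdges (hp : GeneralPosition p)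
    (hU : Disjoint U₁ U₂) (hS₁ : S₁ ⊆ U₁) (hS₂ : S₂ ⊆ U₂) {F₁ F₂ C : Set (Sym2 V)}
    (hF₁ : F₁ ⊆ U₁.sym2) (hF₂ : F₂ ⊆ U₂.sym2) (hC : C ⊆ (S₁ ∪ S₂).sym2)
    (h : Disjoint (edgeSpan p (cliqueEdges S₁ ∪ cliqueEdges S₂)) (edgeSpan p C)) :
    Disjoint (edgeSpan p (F₁ ∪ F₂)) (edgeSpan p C) := by
  have hF : edgeSpan p (F₁ ∪ F₂) ≤ vanishOn U₁ ⊓ equilibrium p ⊔ vanishOn U₂ ⊓ equilibrium p := by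
    rw [edgeSpan_union]
    exact sup_le_sup (le_inf (edgeSpan_le_vanishOn p hF₁) (edgeSpan_le_equilibrium p F₁))
      (le_inf (edgeSpan_le_vanishOn p hF₂) (edgeSpan_le_equilibrium p F₂))
  rw [disjoint_iff_inf_le]
  refine le_trans (le_inf ?_ inf_le_right) h.le_bot
  exact (inf_le_inf hF (edgeSpan_le_vanishOn p hC)).trans
    (sup_inf_vanishOn_le_edgeSpan_cliqueEdges hp hU hS₁ hS₂)

end Cut

theorem disconnecting_lemma_general {V : Type*} [Fintype V] (G : SimpleGraph V)
    (p : V → ℝ × ℝ) (hp : GeneralPosition p)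
    (k : ℕ) (a b : Fin k → V) (V₁ V₂ : Set V)
    (hdisj : Disjoint V₁ V₂)
    (ha : ∀ t, a t ∈ V₁) (hb : ∀ t, b t ∈ V₂)
    (E₁ E₂ : Set (Sym2 V))
    (hE₁ : E₁ = {e ∈ G.edgeSet | ∀ v ∈ e, v ∈ V₁})
    (hE₂ : E₂ = {e ∈ G.edgeSet | ∀ v ∈ e, v ∈ V₂})
    (hE : G.edgeSet = E₁ ∪ E₂ ∪ {e | ∃ t, e = s(a t, b t)})
    (E₅ : Set (Sym2 V))
    (hE₅ : E₅ = {e | ∃ x ∈ Set.range a, ∃ y ∈ Set.range a, x ≠ y ∧ e = s(x, y)}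
      ∪ {e | ∃ x ∈ Set.range b, ∃ y ∈ Set.range b, x ≠ y ∧ e = s(x, y)}
      ∪ {e | ∃ t, e = s(a t, b t)})
    (h₅ : stressNum p E₅ = 0) :
    stressNum p G.edgeSet = stressNum p E₁ + stressNum p E₂ := by
  set Cut : Set (Sym2 V) := {e | ∃ t, e = s(a t, b t)}
  have hra : range a ⊆ V₁ := range_subset_iff.2 ha
  have hrb : range b ⊆ V₂ := range_subset_iff.2 hb
  have hE₁V : E₁ ⊆ V₁.sym2 := hE₁ ▸ fun _ he => mem_sym2_iff_subset.2 he.2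
  have hE₂V : E₂ ⊆ V₂.sym2 := hE₂ ▸ fun _ he => mem_sym2_iff_subset.2 he.2
  have hCut : Cut ⊆ (range a ∪ range b).sym2 := by
    rintro _ ⟨t, rfl⟩
    exact ⟨Or.inl ⟨t, rfl⟩, Or.inr ⟨t, rfl⟩⟩
  have hsides : Disjoint (V₁.sym2 ∪ V₂.sym2) Cut := by
    rw [disjoint_union_left, disjoint_right, disjoint_right]
    constructor <;> rintro _ ⟨t, rfl⟩ ⟨h₁, h₂⟩
    · exact disjoint_left.1 hdisj h₂ (hb t)
    · exact disjoint_left.1 hdisj (ha t) h₁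
  have hcliques : cliqueEdges (range a) ∪ cliqueEdges (range b) ⊆ V₁.sym2 ∪ V₂.sym2 :=
    union_subset_union ((cliqueEdges_subset_sym2 _).trans (sym2_mono hra))
      ((cliqueEdges_subset_sym2 _).trans (sym2_mono hrb))
  obtain ⟨-, hCut₀, hcliquesCut⟩ :=
    (stressNum_union_eq_zero_iff (hsides.mono_left hcliques)).1 (hE₅ ▸ h₅)
  rw [hE, stressNum_union_of_disjoint_edgeSpan (hsides.mono_left (union_subset_union hE₁V hE₂V))
      (disjoint_edgeSpan_union_of_disjoint_cliqueEdges hp hdisj hra hrb hE₁V hE₂V hCut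
        hcliquesCut),
    stressNum_union_of_disjoint_edgeSpan ((disjoint_sym2 hdisj).mono hE₁V hE₂V)
      ((disjoint_vanishOn hdisj).mono (edgeSpan_le_vanishOn p hE₁V) (edgeSpan_le_vanishOn p hE₂V)),
    hCut₀, add_zero]

/-- **Disconnecting Lemma.** Suppose the connected graph `G` becomes the disjoint union of two
connected graphs `G₁ = (V₁, E₁)` and `G₂ = (V₂, E₂)` upon removing the `k` edges
`{a t, b t}` (`t : Fin k`) with `a t ∈ V₁` and `b t ∈ V₂`.  Let `E₅` consist of all edges of
the complete graphs on `V₃ = {a t}` and on `V₄ = {b t}` together with the removed edges.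
If `s_p(E₅) = 0`, then `s_p(E) = s_p(E₁) + s_p(E₂)`. -/
theorem disconnecting_lemma {V : Type*} [Fintype V] (G : SimpleGraph V)
    (hG : G.Connected) (p : V → ℝ × ℝ) (hp : GeneralPosition p)
    (k : ℕ) (a b : Fin k → V) (V₁ V₂ : Set V)
    (hdisj : Disjoint V₁ V₂) (hcover : V₁ ∪ V₂ = Set.univ)
    (ha : ∀ t, a t ∈ V₁) (hb : ∀ t, b t ∈ V₂)
    (hadj : ∀ t, G.Adj (a t) (b t))
    (E₁ E₂ : Set (Sym2 V))
    (hE₁ : E₁ = {e ∈ G.edgeSet | ∀ v ∈ e, v ∈ V₁})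
    (hE₂ : E₂ = {e ∈ G.edgeSet | ∀ v ∈ e, v ∈ V₂})
    (hE : G.edgeSet = E₁ ∪ E₂ ∪ {e | ∃ t, e = s(a t, b t)})
    (h₁ : (G.induce V₁).Connected) (h₂ : (G.induce V₂).Connected)
    (E₅ : Set (Sym2 V))
    (hE₅ : E₅ = {e | ∃ x ∈ Set.range a, ∃ y ∈ Set.range a, x ≠ y ∧ e = s(x, y)}
      ∪ {e | ∃ x ∈ Set.range b, ∃ y ∈ Set.range b, x ≠ y ∧ e = s(x, y)}
      ∪ {e | ∃ t, e = s(a t, b t)})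
    (h₅ : stressNum p E₅ = 0) :
    stressNum p G.edgeSet = stressNum p E₁ + stressNum p E₂ :=
  disconnecting_lemma_general G p hp k a b V₁ V₂ hdisj ha hb E₁ E₂ hE₁ hE₂ hE E₅ hE₅ h₅
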